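/- Let t ∈ ℝ, let γ : [t−1, t] → ℝ^d be absolutely continuous, let v ∈ ℝ^d with |v| ≤ √d, and define the shifted curve γ̃(τ) = γ(τ) + v·(τ − t + 1) for τ ∈ [t−1, t]. Then there is a constant c > 0, depending only on d, |b|, C₁ and C₂, such that |A^{W,b}_{t−1,t}(γ̃) − A^{W,b}_{t−1,t}(γ)| ≤ c·( 1 + max_{t−1 ≤ s ≤ t} |W(s) − W(t)| )·( 1 + ∫_{t−1}^{t} |γ̇(τ)| dτ )·|v|. -/

import Mathlib

open MeasureTheory Set Real RealInnerProductSpace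

/-- `γ : [s,t] → ℝ^d` is absolutely continuous with (integrable) derivative `γ'`:
`γ τ = γ s + ∫_s^τ γ' u du` for all `τ ∈ [s,t]`. -/
def IsACWith {d : ℕ} (γ γ' : ℝ → EuclideanSpace ℝ (Fin d)) (s t : ℝ) : Prop :=
  IntervalIntegrable γ' volume s t ∧
    ∀ τ ∈ Set.Icc s t, γ τ = γ s + ∫ u in s..τ, γ' u

/-- The action `A^{W,b}_{s,t}(γ) = ∫_s^t ((1/2)|γ̇ - b|² + ∇F(γ)·γ̇ (W(τ) - W(t)) - (1/2)|b|²) dτ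
- F(γ(s)) (W(t) - W(s))`, expressed via the pair `(γ, γ')`. -/
noncomputable def actionB {d : ℕ} (F : EuclideanSpace ℝ (Fin d) → ℝ) (W : ℝ → ℝ)
    (b : EuclideanSpace ℝ (Fin d)) (γ γ' : ℝ → EuclideanSpace ℝ (Fin d)) (s t : ℝ) : ℝ :=
  (∫ τ in s..t, ((1/2) * ‖γ' τ - b‖^2
      + ⟪gradient F (γ τ), γ' τ⟫ * (W τ - W t) - (1/2) * ‖b‖^2))
    - F (γ s) * (W t - W s)

/-- `max_{s ≤ τ ≤ t} |W(τ) - W(t)|`. -/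
noncomputable def maxW (W : ℝ → ℝ) (s t : ℝ) : ℝ :=
  sSup ((fun τ => |W τ - W t|) '' Set.Icc s t)

/-- `v ∈ ℤ^d`. -/
def IsIntVec {d : ℕ} (v : EuclideanSpace ℝ (Fin d)) : Prop :=
  ∀ i, ∃ k : ℤ, v i = (k : ℝ)

/-! The shift leaves `γ (t-1)` fixed, so the boundary terms of the two actions cancel and the
difference is the integral of the difference of the integrands. Pointwise this difference is
`⟪γ' - b, v⟫ + |v|²/2 + (⟪∇F(γ̃) - ∇F(γ), γ'⟫ + ⟪∇F(γ̃), v⟫) (W τ - W t)`, and Cauchy–Schwarz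
together with the Lipschitz bound `C₂` on `∇F` (the shift moves points by at most `|v|`) bounds it
by `((1 + M C₂) |γ'| + |b| + |v|/2 + M C₁) |v|` with `M = maxW W (t-1) t`. Integrating over an
interval of length one gives the claim. -/

open scoped Gradient

theorem norm_intervalIntegral_sub_le_of_norm_sub_le {E : Type*} [NormedAddCommGroup E]
    [NormedSpace ℝ E] {f g : ℝ → E} {bound : ℝ → ℝ} {s t : ℝ} (hst : s ≤ t)
    (hf : AEStronglyMeasurable f (volume.restrict (Ioc s t)))
    (hg : AEStronglyMeasurable g (volume.restrict (Ioc s t)))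
    (hbound : IntervalIntegrable bound volume s t)
    (hle : ∀ τ ∈ Ioc s t, ‖f τ - g τ‖ ≤ bound τ) :
    ‖(∫ τ in s..t, f τ) - ∫ τ in s..t, g τ‖ ≤ ∫ τ in s..t, bound τ := by
  have hdiff : IntervalIntegrable (f - g) volume s t := by
    rw [intervalIntegrable_iff_integrableOn_Ioc_of_le hst]
    exact hbound.1.mono' (hf.sub hg) ((ae_restrict_iff' measurableSet_Ioc).2 (ae_of_all _ hle))
  -- `f` and `g` differ by an integrable function: either both integrals are junk `0` or neither is.
  by_cases hgi : IntervalIntegrable g volume s t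
  · have hfi : IntervalIntegrable f volume s t := by simpa using hdiff.add hgi
    rw [← intervalIntegral.integral_sub hfi hgi]
    exact intervalIntegral.norm_integral_le_of_norm_le hst (ae_of_all _ hle) hbound
  · have hfi : ¬IntervalIntegrable f volume s t := fun hfi => hgi (by simpa using hfi.sub hdiff)
    rw [intervalIntegral.integral_undef hfi, intervalIntegral.integral_undef hgi, sub_zero,
      norm_zero, intervalIntegral.integral_of_le hst]
    exact setIntegral_nonneg measurableSet_Ioc fun τ hτ => (norm_nonneg _).trans (hle τ hτ)

theorem IsACWith.continuousOn {d : ℕ} {γ γ' : ℝ → EuclideanSpace ℝ (Fin d)} {s t : ℝ}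
    (hγ : IsACWith γ γ' s t) : ContinuousOn γ (Icc s t) := by
  have hprim := intervalIntegral.continuousOn_primitive_interval' hγ.1 left_mem_uIcc
  exact (continuousOn_const.add (hprim.mono Icc_subset_uIcc)).congr hγ.2

theorem abs_sub_le_maxW {W : ℝ → ℝ} {s t τ : ℝ} (hW : ContinuousOn W (Icc s t))
    (hτ : τ ∈ Icc s t) : |W τ - W t| ≤ maxW W s t :=
  le_csSup (isCompact_Icc.bddAbove_image ((hW.sub continuousOn_const).abs)) ⟨τ, hτ, rfl⟩

theorem maxW_nonneg {W : ℝ → ℝ} {s t : ℝ} (hW : ContinuousOn W (Icc s t)) (hst : s ≤ t) :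
    0 ≤ maxW W s t :=
  (abs_nonneg _).trans (abs_sub_le_maxW hW (right_mem_Icc.2 hst))

theorem ContDiff.differentiable_gradient {E : Type*} [NormedAddCommGroup E]
    [InnerProductSpace ℝ E] [CompleteSpace E] {F : E → ℝ} (hF : ContDiff ℝ 2 F) :
    Differentiable ℝ (∇ F) :=
  (InnerProductSpace.toDual ℝ E).symm.differentiable.comp
    ((hF.fderiv_right (m := 1) (by norm_num)).differentiable (by norm_num))

section Lagrangian

variable {E : Type*} [NormedAddCommGroup E] [InnerProductSpace ℝ E]

/-- The integrand of `actionB`, with `G = ∇F` and `w` standing for `W τ - W t`. -/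
noncomputable def lagrangian (G : E → E) (b : E) (w : ℝ) (x x' : E) : ℝ :=
  (1/2) * ‖x' - b‖^2 + ⟪G x, x'⟫ * w - (1/2) * ‖b‖^2

theorem lagrangian_shift_sub (G : E → E) (b : E) (w lam : ℝ) (x x' v : E) :
    lagrangian G b w (x + lam • v) (x' + v) - lagrangian G b w x x'
      = ⟪x' - b, v⟫ + (1/2) * ‖v‖^2
        + (⟪G (x + lam • v) - G x, x'⟫ + ⟪G (x + lam • v), v⟫) * w := by
  have hsplit : x' + v - b = (x' - b) + v := by abel
  simp only [lagrangian, hsplit, norm_add_sq_real, inner_add_right, inner_sub_left]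
  ring

theorem abs_lagrangian_shift_sub_le {G : E → E} {C₁ C₂ M : ℝ} (hC₂ : 0 ≤ C₂)
    (hG : ∀ x, ‖G x‖ ≤ C₁) (hGlip : ∀ x y, ‖G x - G y‖ ≤ C₂ * ‖x - y‖)
    (b : E) {w lam : ℝ} (hw : |w| ≤ M) (hlam : |lam| ≤ 1) (x x' v : E) :
    |lagrangian G b w (x + lam • v) (x' + v) - lagrangian G b w x x'|
      ≤ ((1 + M * C₂) * ‖x'‖ + (‖b‖ + ‖v‖ / 2 + M * C₁)) * ‖v‖ := by
  have hshift : ‖G (x + lam • v) - G x‖ ≤ C₂ * ‖v‖ :=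
    calc ‖G (x + lam • v) - G x‖ ≤ C₂ * (|lam| * ‖v‖) := by
          simpa [norm_smul] using hGlip (x + lam • v) x
      _ ≤ C₂ * ‖v‖ := by gcongr; exact mul_le_of_le_one_left (norm_nonneg v) hlam
  have hkin : |⟪x' - b, v⟫| ≤ (‖x'‖ + ‖b‖) * ‖v‖ :=
    (abs_real_inner_le_norm _ _).trans (by gcongr; exact norm_sub_le _ _)
  have hpot : |⟪G (x + lam • v) - G x, x'⟫ + ⟪G (x + lam • v), v⟫|
      ≤ C₂ * ‖v‖ * ‖x'‖ + C₁ * ‖v‖ :=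
    (abs_add_le _ _).trans (add_le_add
      ((abs_real_inner_le_norm _ _).trans (by gcongr))
      ((abs_real_inner_le_norm _ _).trans (by gcongr; exact hG _)))
  rw [lagrangian_shift_sub]
  calc _ ≤ |⟪x' - b, v⟫| + |(1/2) * ‖v‖^2|
        + |⟪G (x + lam • v) - G x, x'⟫ + ⟪G (x + lam • v), v⟫| * |w| := by
        rw [← abs_mul]; exact abs_add_three _ _ _
    _ ≤ (‖x'‖ + ‖b‖) * ‖v‖ + (1/2) * ‖v‖^2 + (C₂ * ‖v‖ * ‖x'‖ + C₁ * ‖v‖) * M := by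
        rw [abs_of_nonneg (by positivity : (0:ℝ) ≤ (1/2) * ‖v‖^2)]
        exact add_le_add_three hkin le_rfl
          (mul_le_mul hpot hw (abs_nonneg _) ((abs_nonneg _).trans hpot))
    _ = _ := by ring

theorem MeasureTheory.AEStronglyMeasurable.lagrangian {μ : Measure ℝ} {G : E → E}
    (hG : Continuous G) (b : E) {w : ℝ → ℝ} {x x' : ℝ → E} (hw : AEStronglyMeasurable w μ)
    (hx : AEStronglyMeasurable x μ) (hx' : AEStronglyMeasurable x' μ) :
    AEStronglyMeasurable (fun τ => lagrangian G b (w τ) (x τ) (x' τ)) μ := by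
  unfold _root_.lagrangian
  have hGx := hG.comp_aestronglyMeasurable hx
  fun_prop

end Lagrangian

theorem actionB_sub_actionB_of_eq_left {d : ℕ} (F : EuclideanSpace ℝ (Fin d) → ℝ) (W : ℝ → ℝ)
    (b : EuclideanSpace ℝ (Fin d)) {γ₁ γ₁' γ₂ γ₂' : ℝ → EuclideanSpace ℝ (Fin d)} {s t : ℝ}
    (h : γ₁ s = γ₂ s) :
    actionB F W b γ₁ γ₁' s t - actionB F W b γ₂ γ₂' s t
      = (∫ τ in s..t, lagrangian (∇ F) b (W τ - W t) (γ₁ τ) (γ₁' τ))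
        - ∫ τ in s..t, lagrangian (∇ F) b (W τ - W t) (γ₂ τ) (γ₂' τ) := by
  simp only [actionB, lagrangian, h]
  ring

theorem norm_gradient_sub_le {E : Type*} [NormedAddCommGroup E] [InnerProductSpace ℝ E]
    [CompleteSpace E] {F : E → ℝ} {C : ℝ} (hF : ContDiff ℝ 2 F) (hC : ∀ x, ‖fderiv ℝ (∇ F) x‖ ≤ C)
    (x y : E) : ‖∇ F x - ∇ F y‖ ≤ C * ‖x - y‖ :=
  convex_univ.norm_image_sub_le_of_norm_fderiv_le (fun z _ => hF.differentiable_gradient z)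
    (fun z _ => hC z) (mem_univ y) (mem_univ x)

theorem abs_actionB_shift_sub_le {d : ℕ} {C₁ C₂ : ℝ} {F : EuclideanSpace ℝ (Fin d) → ℝ}
    (hF : ContDiff ℝ 2 F) (hC₁ : ∀ x, ‖∇ F x‖ ≤ C₁) (hC₂ : ∀ x, ‖fderiv ℝ (∇ F) x‖ ≤ C₂)
    {W : ℝ → ℝ} (hW : Continuous W) (b : EuclideanSpace ℝ (Fin d)) {s t : ℝ} (hst : s ≤ t)
    {γ γ' : ℝ → EuclideanSpace ℝ (Fin d)} (hγ : IsACWith γ γ' s t)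
    {φ : ℝ → ℝ} (hφ : Continuous φ) (hφs : φ s = 0) (hφ1 : ∀ τ ∈ Icc s t, |φ τ| ≤ 1)
    (v : EuclideanSpace ℝ (Fin d)) :
    |actionB F W b (fun τ => γ τ + φ τ • v) (fun τ => γ' τ + v) s t - actionB F W b γ γ' s t|
      ≤ ∫ τ in s..t,
          ((1 + maxW W s t * C₂) * ‖γ' τ‖ + (‖b‖ + ‖v‖ / 2 + maxW W s t * C₁)) * ‖v‖ := by
  have hC₂0 : 0 ≤ C₂ := (norm_nonneg _).trans (hC₂ 0)
  have hG : Continuous (∇ F) := hF.differentiable_gradient.continuous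
  have hγm : AEStronglyMeasurable γ (volume.restrict (Ioc s t)) :=
    (hγ.continuousOn.mono Ioc_subset_Icc_self).aestronglyMeasurable measurableSet_Ioc
  have hγ'm : AEStronglyMeasurable γ' (volume.restrict (Ioc s t)) := hγ.1.1.aestronglyMeasurable
  have hWm : AEStronglyMeasurable (fun τ => W τ - W t) (volume.restrict (Ioc s t)) :=
    (hW.sub continuous_const).aestronglyMeasurable
  rw [actionB_sub_actionB_of_eq_left F W b (by simp [hφs]), ← Real.norm_eq_abs]
  refine norm_intervalIntegral_sub_le_of_norm_sub_le hst
    (.lagrangian hG b hWm (hγm.add (by fun_prop)) (hγ'm.add aestronglyMeasurable_const))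
    (.lagrangian hG b hWm hγm hγ'm)
    (((hγ.1.norm.const_mul _).add intervalIntegrable_const).mul_const _) fun τ hτ => ?_
  exact abs_lagrangian_shift_sub_le hC₂0 hC₁ (norm_gradient_sub_le hF hC₂) b
    (abs_sub_le_maxW hW.continuousOn (Ioc_subset_Icc_self hτ))
    (hφ1 τ (Ioc_subset_Icc_self hτ)) _ _ _

theorem action_shifted_curve_difference_bound_general (d : ℕ) (C₁ C₂ B : ℝ) :
    ∃ c : ℝ, 0 < c ∧
      ∀ b : EuclideanSpace ℝ (Fin d), ‖b‖ = B →
      ∀ F : EuclideanSpace ℝ (Fin d) → ℝ, ContDiff ℝ 2 F →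
        (∀ x, ‖gradient F x‖ ≤ C₁) →
        (∀ x, ‖fderiv ℝ (gradient F) x‖ ≤ C₂) →
      ∀ W : ℝ → ℝ, Continuous W →
      ∀ t : ℝ, ∀ γ γ' : ℝ → EuclideanSpace ℝ (Fin d), IsACWith γ γ' (t-1) t →
      ∀ v : EuclideanSpace ℝ (Fin d), ‖v‖ ≤ Real.sqrt d →
        |actionB F W b (fun τ => γ τ + (τ - t + 1) • v) (fun τ => γ' τ + v) (t-1) t
            - actionB F W b γ γ' (t-1) t|
          ≤ c * (1 + maxW W (t-1) t) * (1 + ∫ τ in (t-1)..t, ‖γ' τ‖) * ‖v‖ := by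
  refine ⟨1 + √d + |B| + |C₁| + |C₂|, by positivity, ?_⟩
  intro b hB F hF hC₁ hC₂ W hW t γ γ' hγ v hv
  subst hB
  have hst : t - 1 ≤ t := by linarith
  have hC₁0 : 0 ≤ C₁ := (norm_nonneg _).trans (hC₁ 0)
  have hC₂0 : 0 ≤ C₂ := (norm_nonneg _).trans (hC₂ 0)
  have hM : 0 ≤ maxW W (t-1) t := maxW_nonneg hW.continuousOn hst
  have hI : 0 ≤ ∫ τ in (t-1)..t, ‖γ' τ‖ :=
    intervalIntegral.integral_nonneg hst fun _ _ => norm_nonneg _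
  have hbound := abs_actionB_shift_sub_le hF hC₁ hC₂ hW b hst hγ (φ := fun τ => τ - t + 1)
    (by fun_prop) (by ring) (fun τ hτ => abs_le.2 ⟨by linarith [hτ.1], by linarith [hτ.2]⟩) v
  rw [intervalIntegral.integral_mul_const, intervalIntegral.integral_add (hγ.1.norm.const_mul _)
    intervalIntegrable_const, intervalIntegral.integral_const_mul, intervalIntegral.integral_const,
    sub_sub_cancel, one_smul] at hbound
  refine hbound.trans ?_
  rw [abs_norm, abs_of_nonneg hC₁0, abs_of_nonneg hC₂0]
  gcongr
  nlinarith [Real.sqrt_nonneg d, mul_nonneg hC₁0 hM, mul_nonneg hC₂0 hM, mul_nonneg hM hI,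
    mul_nonneg (mul_nonneg hC₂0 hM) hI, norm_nonneg b]

/-- For an absolutely continuous `γ : [t-1, t] → ℝ^d`, `v ∈ ℝ^d` with
`|v| ≤ √d`, and the shifted curve `γ̃(τ) = γ(τ) + v (τ - t + 1)`, there is a constant `c > 0`
depending only on `d, |b|, C₁, C₂` such that
`|A^{W,b}_{t-1,t}(γ̃) - A^{W,b}_{t-1,t}(γ)| ≤ c (1 + max_{t-1≤s≤t} |W(s) - W(t)|)
(1 + ∫_{t-1}^t |γ̇|) |v|`. -/
theorem action_shifted_curve_difference_bound (d : ℕ) (hd : 1 ≤ d) (C₁ C₂ B : ℝ) :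
    ∃ c : ℝ, 0 < c ∧
      ∀ b : EuclideanSpace ℝ (Fin d), ‖b‖ = B →
      ∀ F : EuclideanSpace ℝ (Fin d) → ℝ, ContDiff ℝ 2 F →
        (∀ x, ‖gradient F x‖ ≤ C₁) →
        (∀ x, ‖fderiv ℝ (gradient F) x‖ ≤ C₂) →
      ∀ W : ℝ → ℝ, Continuous W →
      ∀ t : ℝ, ∀ γ γ' : ℝ → EuclideanSpace ℝ (Fin d), IsACWith γ γ' (t-1) t →
      ∀ v : EuclideanSpace ℝ (Fin d), ‖v‖ ≤ Real.sqrt d →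
        |actionB F W b (fun τ => γ τ + (τ - t + 1) • v) (fun τ => γ' τ + v) (t-1) t
            - actionB F W b γ γ' (t-1) t|
          ≤ c * (1 + maxW W (t-1) t) * (1 + ∫ τ in (t-1)..t, ‖γ' τ‖) * ‖v‖ :=
  action_shifted_curve_difference_bound_general d C₁ C₂ B
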